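/- arXiv:1207.3261 — 5 statements merged into one kernel-verified Lean document; each statement's English description precedes it below -/
import Mathlib

section
/- For a full-rank density matrix σ and Hermitian matrices f, g, and p, q ∈ (1,∞) with 1/p + 1/q = 1, the weighted inner product satisfies the Hölder-type inequality |Tr(σ^{1/2} f σ^{1/2} g)| ≤ ‖f‖_{p,σ} · ‖g‖_{q,σ}. -/
open Matrix
open scoped ComplexOrder

noncomputable section

/-- Square complex matrices. -/
abbrev Mat (d : ℕ) := Matrix (Fin d) (Fin d) ℂ

variable {d : ℕ}

/-- `A ^ r` for a selfadjoint matrix `A`, via the continuous functional calculus. -/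
def matPow (A : Mat d) (r : ℝ) : Mat d :=
  cfc (fun x : ℝ => x ^ r) A

/-- `|A| = (A† A)^{1/2}`. -/
def matAbs (A : Mat d) : Mat d :=
  cfc Real.sqrt (Aᴴ * A)

/-- Matrix logarithm via the continuous functional calculus. -/
def matLog (A : Mat d) : Mat d :=
  cfc Real.log A

/-- The `σ`-weighted `L_p` norm `‖f‖_{p,σ} = (Tr |σ^{1/(2p)} f σ^{1/(2p)}|^p)^{1/p}`. -/
def pnorm (σ f : Mat d) (p : ℝ) : ℝ :=
  ((matPow (matAbs (matPow σ (1/(2*p)) * f * matPow σ (1/(2*p)))) p).trace.re) ^ (1/p)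

/-
Diagonalise `A = U diag(a) U*` and `B = V diag(b) V*`. Then `Tr(AB) = ∑ᵢⱼ aᵢ bⱼ |Wᵢⱼ|²` with
`W = U*V` unitary, so the weights `|Wᵢⱼ|²` form a doubly stochastic matrix, and Hölder's inequality
on the product index set, with the weight split as `|Wᵢⱼ|^{2/p} |Wᵢⱼ|^{2/q}`, bounds this sum by
`(∑ |aᵢ|^p)^{1/p} (∑ |bⱼ|^q)^{1/q}`. The weighted statement reduces to this one for
`A = σ^{1/(2p)} f σ^{1/(2p)}` and `B = σ^{1/(2q)} g σ^{1/(2q)}`, because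
`σ^{1/2} = σ^{1/(2p)} σ^{1/(2q)}` and the trace is cyclic.
-/

namespace Matrix

variable {n : Type*} [Fintype n] [DecidableEq n]

lemma normSq_mem_doublyStochastic {U : Matrix n n ℂ} (hU : U ∈ unitaryGroup n ℂ) :
    of (fun i j => Complex.normSq (U i j)) ∈ doublyStochastic ℝ n := by
  have hrow (i : n) : ∑ j, Complex.normSq (U i j) = 1 := by
    have h := congr_fun₂ (mem_unitaryGroup_iff.mp hU) i i
    simp only [mul_apply, star_apply, RCLike.star_def, Complex.mul_conj, one_apply_eq] at h
    exact_mod_cast h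
  have hcol (j : n) : ∑ i, Complex.normSq (U i j) = 1 := by
    have h := congr_fun₂ (mem_unitaryGroup_iff'.mp hU) j j
    simp only [mul_apply, star_apply, RCLike.star_def, mul_comm ((starRingEnd ℂ) _),
      Complex.mul_conj, one_apply_eq] at h
    exact_mod_cast h
  exact mem_doublyStochastic_iff_sum.mpr ⟨fun _ _ => Complex.normSq_nonneg _, hrow, hcol⟩

lemma sum_mul_mul_le_of_mem_doublyStochastic {M : Matrix n n ℝ} (hM : M ∈ doublyStochastic ℝ n)
    (x y : n → ℝ) {p q : ℝ} (hpq : p.HolderConjugate q) :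
    ∑ i, ∑ j, M i j * x i * y j ≤ (∑ i, |x i| ^ p) ^ (1 / p) * (∑ j, |y j| ^ q) ^ (1 / q) := by
  have hM₀ (i j : n) : 0 ≤ M i j := nonneg_of_mem_doublyStochastic hM
  have hsplit (i j : n) : M i j ^ (1 / p) * M i j ^ (1 / q) = M i j := by
    rw [← Real.rpow_add' (hM₀ i j) (by rw [hpq.one_div_add_one_div]; norm_num),
      hpq.one_div_add_one_div, div_one, Real.rpow_one]
  have hpow (i j : n) {r : ℝ} (hr : r ≠ 0) (c : ℝ) :
      |M i j ^ (1 / r) * c| ^ r = M i j * |c| ^ r := by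
    rw [abs_mul, abs_of_nonneg (Real.rpow_nonneg (hM₀ i j) _),
      Real.mul_rpow (Real.rpow_nonneg (hM₀ i j) _) (abs_nonneg _), ← Real.rpow_mul (hM₀ i j),
      one_div_mul_cancel hr, Real.rpow_one]
  calc ∑ i, ∑ j, M i j * x i * y j
      = ∑ ij : n × n, (M ij.1 ij.2 ^ (1 / p) * x ij.1) * (M ij.1 ij.2 ^ (1 / q) * y ij.2) := by
        rw [Fintype.sum_prod_type]
        refine Finset.sum_congr rfl fun i _ => Finset.sum_congr rfl fun j _ => ?_
        rw [mul_mul_mul_comm, hsplit, mul_assoc]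
    _ ≤ (∑ ij : n × n, |M ij.1 ij.2 ^ (1 / p) * x ij.1| ^ p) ^ (1 / p) *
          (∑ ij : n × n, |M ij.1 ij.2 ^ (1 / q) * y ij.2| ^ q) ^ (1 / q) :=
        Real.inner_le_Lp_mul_Lq _ _ _ hpq
    _ = (∑ i, |x i| ^ p) ^ (1 / p) * (∑ j, |y j| ^ q) ^ (1 / q) := by
        simp only [hpow _ _ hpq.ne_zero, hpow _ _ hpq.symm.ne_zero]
        rw [Fintype.sum_prod_type, Fintype.sum_prod_type_right]
        simp only [← Finset.sum_mul, sum_row_of_mem_doublyStochastic hM,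
          sum_col_of_mem_doublyStochastic hM, one_mul]

lemma abs_sum_mul_mul_le_of_mem_doublyStochastic {M : Matrix n n ℝ}
    (hM : M ∈ doublyStochastic ℝ n) (x y : n → ℝ) {p q : ℝ} (hpq : p.HolderConjugate q) :
    |∑ i, ∑ j, M i j * x i * y j| ≤ (∑ i, |x i| ^ p) ^ (1 / p) * (∑ j, |y j| ^ q) ^ (1 / q) := by
  refine abs_le.mpr ⟨neg_le.mp ?_, sum_mul_mul_le_of_mem_doublyStochastic hM x y hpq⟩
  simpa [Finset.sum_neg_distrib] using sum_mul_mul_le_of_mem_doublyStochastic hM (-x) y hpq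

lemma IsHermitian.exists_mem_doublyStochastic_trace_mul_eq {A B : Matrix n n ℂ}
    (hA : A.IsHermitian) (hB : B.IsHermitian) :
    ∃ M ∈ doublyStochastic ℝ n,
      (A * B).trace = ((∑ i, ∑ j, M i j * hA.eigenvalues i * hB.eigenvalues j : ℝ) : ℂ) := by
  set U : Matrix n n ℂ := ↑hA.eigenvectorUnitary
  set W := star U * hB.eigenvectorUnitary
  refine ⟨_, normSq_mem_doublyStochastic
    (mul_mem (Unitary.star_mem hA.eigenvectorUnitary.2) hB.eigenvectorUnitary.2), ?_⟩
  have hcycle : (A * B).trace = (diagonal (Complex.ofReal ∘ hA.eigenvalues) * W *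
      diagonal (Complex.ofReal ∘ hB.eigenvalues) * star W).trace := by
    conv_lhs => rw [hA.spectral_theorem, hB.spectral_theorem]
    simp only [Unitary.conjStarAlgAut_apply, W, star_mul, star_star, Matrix.mul_assoc]
    rw [trace_mul_comm U]
    simp only [Matrix.mul_assoc]
    rfl
  rw [hcycle, trace]
  push_cast
  refine Finset.sum_congr rfl fun i _ => ?_
  rw [diag_apply, mul_apply]
  refine Finset.sum_congr rfl fun j _ => ?_
  rw [mul_diagonal, diagonal_mul, star_apply, of_apply, RCLike.star_def, ← Complex.mul_conj]
  simp only [Function.comp_apply]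
  ring

lemma IsHermitian.norm_trace_mul_le {A B : Matrix n n ℂ} (hA : A.IsHermitian) (hB : B.IsHermitian)
    {p q : ℝ} (hpq : p.HolderConjugate q) :
    ‖(A * B).trace‖ ≤
      (∑ i, |hA.eigenvalues i| ^ p) ^ (1 / p) * (∑ j, |hB.eigenvalues j| ^ q) ^ (1 / q) := by
  obtain ⟨M, hM, htrace⟩ := hA.exists_mem_doublyStochastic_trace_mul_eq hB
  rw [htrace, Complex.norm_real, Real.norm_eq_abs]
  exact abs_sum_mul_mul_le_of_mem_doublyStochastic hM _ _ hpq

lemma IsHermitian.trace_cfc {A : Matrix n n ℂ} (hA : A.IsHermitian) (h : ℝ → ℝ) :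
    (cfc h A).trace = ∑ i, (h (hA.eigenvalues i) : ℂ) := by
  rw [hA.cfc_eq, IsHermitian.cfc, Unitary.conjStarAlgAut_apply, trace_mul_cycle,
    Unitary.coe_star_mul_self, Matrix.one_mul, trace_diagonal]
  rfl

end Matrix

lemma matAbs_eq_cfc_abs {A : Mat d} (hA : A.IsHermitian) : matAbs A = cfc (fun x : ℝ => |x|) A := by
  have hsq : Aᴴ * A = cfc (fun x : ℝ => x * x) A := by
    rw [cfc_mul _ _ A, cfc_id' ℝ A, hA.eq]
  rw [matAbs, hsq, ← cfc_comp Real.sqrt (fun x : ℝ => x * x) A]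
  exact cfc_congr fun x _ => Real.sqrt_mul_self_eq_abs x

lemma trace_matPow_matAbs {A : Mat d} (hA : A.IsHermitian) (r : ℝ) :
    (matPow (matAbs A) r).trace = ∑ i, ((|hA.eigenvalues i| ^ r : ℝ) : ℂ) := by
  rw [matPow, matAbs_eq_cfc_abs hA, ← cfc_comp (fun x : ℝ => x ^ r) (fun x : ℝ => |x|) A
    hA.isSelfAdjoint ((A.finite_real_spectrum.image _).continuousOn _), hA.trace_cfc]
  rfl

def schattenNorm (A : Mat d) (p : ℝ) : ℝ :=
  (matPow (matAbs A) p).trace.re ^ (1 / p)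

lemma pnorm_eq_schattenNorm (σ f : Mat d) (p : ℝ) :
    pnorm σ f p = schattenNorm (matPow σ (1 / (2 * p)) * f * matPow σ (1 / (2 * p))) p :=
  rfl

lemma schattenNorm_of_isHermitian {A : Mat d} (hA : A.IsHermitian) (p : ℝ) :
    schattenNorm A p = (∑ i, |hA.eigenvalues i| ^ p) ^ (1 / p) := by
  rw [schattenNorm, trace_matPow_matAbs hA, ← Complex.ofReal_sum, Complex.ofReal_re]

lemma norm_trace_mul_le_schattenNorm_mul {A B : Mat d} (hA : A.IsHermitian) (hB : B.IsHermitian)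
    {p q : ℝ} (hpq : p.HolderConjugate q) :
    ‖(A * B).trace‖ ≤ schattenNorm A p * schattenNorm B q := by
  rw [schattenNorm_of_isHermitian hA, schattenNorm_of_isHermitian hB]
  exact hA.norm_trace_mul_le hB hpq

lemma matPow_isHermitian (A : Mat d) (r : ℝ) : (matPow A r).IsHermitian :=
  cfc_predicate _ _

lemma matPow_mul_matPow {A : Mat d} (hA : A.PosSemidef) {a b : ℝ} (hab : a + b ≠ 0) :
    matPow A a * matPow A b = matPow A (a + b) := by
  rw [matPow, matPow, matPow, ← cfc_mul _ _ A (A.finite_real_spectrum.continuousOn _)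
    (A.finite_real_spectrum.continuousOn _)]
  refine cfc_congr fun x hx => (Real.rpow_add' ?_ hab).symm
  rw [hA.isHermitian.spectrum_real_eq_range_eigenvalues] at hx
  obtain ⟨i, rfl⟩ := hx
  exact hA.eigenvalues_nonneg i

lemma isHermitian_matPow_mul_mul_matPow {f : Mat d} (hf : f.IsHermitian) (A : Mat d) (r : ℝ) :
    (matPow A r * f * matPow A r).IsHermitian := by
  simpa only [(matPow_isHermitian A r).eq] using isHermitian_mul_mul_conjTranspose (matPow A r) hf

theorem weighted_holder_general (σ f g : Mat d) (hσ : σ.PosDef)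
    (hf : f.IsHermitian) (hg : g.IsHermitian)
    (p q : ℝ) (hp : 1 < p) (hpq : 1/p + 1/q = 1) :
    ‖(matPow σ (1/2) * f * matPow σ (1/2) * g).trace‖ ≤
      pnorm σ f p * pnorm σ g q := by
  have hpq' : p.HolderConjugate q :=
    Real.holderConjugate_iff.mpr ⟨hp, by simpa only [one_div] using hpq⟩
  set Sp := matPow σ (1 / (2 * p))
  set Sq := matPow σ (1 / (2 * q))
  have hexp : 1 / (2 * p) + 1 / (2 * q) = 1 / 2 := by linear_combination hpq / 2
  have hsqrt : matPow σ (1 / 2) = Sp * Sq := by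
    rw [matPow_mul_matPow hσ.posSemidef (by rw [hexp]; norm_num), hexp]
  have hsqrt' : matPow σ (1 / 2) = Sq * Sp := by
    rw [matPow_mul_matPow hσ.posSemidef (by rw [add_comm, hexp]; norm_num), add_comm, hexp]
  have htrace : (matPow σ (1/2) * f * matPow σ (1/2) * g).trace =
      (Sp * f * Sp * (Sq * g * Sq)).trace := by
    nth_rewrite 1 [hsqrt']
    rw [hsqrt, show Sq * Sp * f * (Sp * Sq) * g = Sq * (Sp * f * Sp * (Sq * g)) by
      simp only [Matrix.mul_assoc], trace_mul_comm]
    simp only [Matrix.mul_assoc]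
  rw [htrace, pnorm_eq_schattenNorm, pnorm_eq_schattenNorm]
  exact norm_trace_mul_le_schattenNorm_mul (isHermitian_matPow_mul_mul_matPow hf σ _)
    (isHermitian_matPow_mul_mul_matPow hg σ _) hpq'

/-- Hölder-type inequality for the σ-weighted inner product. -/
theorem weighted_holder (σ f g : Mat d) (hσ : σ.PosDef) (hσ1 : σ.trace = 1)
    (hf : f.IsHermitian) (hg : g.IsHermitian)
    (p q : ℝ) (hp : 1 < p) (hq : 1 < q) (hpq : 1/p + 1/q = 1) :
    ‖(matPow σ (1/2) * f * matPow σ (1/2) * g).trace‖ ≤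
      pnorm σ f p * pnorm σ g q :=
  weighted_holder_general σ f g hσ hf hg p q hp hpq
end
end

section
/- For a full-rank density matrix σ, Hermitian f, and p, q ∈ [1,∞), the L_p power operator I_{p,q}(f) = σ^{-1/(2p)} |σ^{1/(2q)} f σ^{1/(2q)}|^{q/p} σ^{-1/(2p)} satisfies ‖I_{p,q}(f)‖_{p,σ}^p = ‖f‖_{q,σ}^q. -/
open Matrix
open scoped ComplexOrder

noncomputable section

variable {d : ℕ}

/-- The `L_p` power operator `I_{p,q}(f) = σ^{-1/(2p)} |σ^{1/(2q)} f σ^{1/(2q)}|^{q/p} σ^{-1/(2p)}`. -/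
def Ipow (σ : Mat d) (p q : ℝ) (f : Mat d) : Mat d :=
  matPow σ (-(1/(2*p))) *
    matPow (matAbs (matPow σ (1/(2*q)) * f * matPow σ (1/(2*q)))) (q/p) *
      matPow σ (-(1/(2*p)))

/-! Conjugating `I_{p,q}(f)` by `σ^{1/(2p)}` leaves exactly `|B|^{q/p}`, where
`B = σ^{1/(2q)} f σ^{1/(2q)}`. Being positive, `|B|^{q/p}` is its own absolute value, and its
`p`-th power is `|B|^q`; so both sides equal `Tr |B|^q`. -/

lemma continuousOn_spectrum (g : ℝ → ℝ) (A : Mat d) : ContinuousOn g (spectrum ℝ A) :=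
  A.finite_real_spectrum.continuousOn g

lemma continuousOn_image_spectrum (g f : ℝ → ℝ) (A : Mat d) :
    ContinuousOn g (f '' spectrum ℝ A) :=
  (A.finite_real_spectrum.image f).continuousOn g

section Functions

variable {H : Mat d} (hH : H.IsHermitian)
include hH

lemma matPow_cfc (g : ℝ → ℝ) (r : ℝ) : matPow (cfc g H) r = cfc (fun x => g x ^ r) H :=
  (cfc_comp' (· ^ r) g H (continuousOn_image_spectrum _ _ _) (continuousOn_spectrum _ _) hH).symm

lemma matAbs_cfc_of_nonneg {g : ℝ → ℝ} (hg : ∀ x ∈ spectrum ℝ H, 0 ≤ g x) :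
    matAbs (cfc g H) = cfc g H := by
  have hgH : (cfc g H).IsHermitian := cfc_predicate g H
  rw [matAbs, hgH.eq,
    ← cfc_mul g g H (continuousOn_spectrum _ _) (continuousOn_spectrum _ _)]
  exact (cfc_comp' Real.sqrt (fun x => g x * g x) H (continuousOn_image_spectrum _ _ _)
    (continuousOn_spectrum _ _) hH).symm.trans
      (cfc_congr fun x hx => Real.sqrt_mul_self (hg x hx))

end Functions

section Absolute

variable (A : Mat d)

lemma matPow_matAbs (r : ℝ) : matPow (matAbs A) r = cfc (fun x => √x ^ r) (Aᴴ * A) :=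
  matPow_cfc (isHermitian_conjTranspose_mul_self A) _ _

lemma matAbs_matPow_matAbs (r : ℝ) : matAbs (matPow (matAbs A) r) = matPow (matAbs A) r := by
  rw [matPow_matAbs]
  exact matAbs_cfc_of_nonneg (isHermitian_conjTranspose_mul_self A) fun x _ => by positivity

lemma matPow_matPow_matAbs (r s : ℝ) :
    matPow (matPow (matAbs A) r) s = matPow (matAbs A) (r * s) := by
  rw [matPow_matAbs, matPow_cfc (isHermitian_conjTranspose_mul_self A), matPow_matAbs]
  exact cfc_congr fun x _ => (Real.rpow_mul (Real.sqrt_nonneg x) r s).symm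

open MatrixOrder in
lemma re_trace_matPow_matAbs_nonneg (r : ℝ) : 0 ≤ (matPow (matAbs A) r).trace.re := by
  rw [matPow_matAbs]
  have hpos : (cfc (fun x => √x ^ r) (Aᴴ * A)).PosSemidef :=
    (cfc_nonneg fun x _ => by positivity).posSemidef
  exact (Complex.nonneg_iff.mp hpos.trace_nonneg).1

end Absolute

lemma matPow_zero {σ : Mat d} (hσ : σ.IsHermitian) : matPow σ 0 = 1 := by
  rw [matPow, cfc_congr fun x _ => Real.rpow_zero x]
  exact cfc_const_one ℝ σ hσ

section Powers

variable {σ : Mat d} (hσ : σ.PosDef)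
include hσ

lemma matPow_mul_matPow_s2 (a b : ℝ) : matPow σ a * matPow σ b = matPow σ (a + b) := by
  rw [matPow, matPow, ← cfc_mul _ _ σ (continuousOn_spectrum _ _) (continuousOn_spectrum _ _)]
  refine cfc_congr fun x hx => (Real.rpow_add ?_ a b).symm
  rw [hσ.1.spectrum_real_eq_range_eigenvalues] at hx
  obtain ⟨i, rfl⟩ := hx
  exact hσ.eigenvalues_pos i

lemma matPow_mul_mul_neg_mul_matPow (a : ℝ) (X : Mat d) :
    matPow σ a * (matPow σ (-a) * X * matPow σ (-a)) * matPow σ a = X := by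
  calc matPow σ a * (matPow σ (-a) * X * matPow σ (-a)) * matPow σ a
      = (matPow σ a * matPow σ (-a)) * X * (matPow σ (-a) * matPow σ a) := by
        simp only [Matrix.mul_assoc]
    _ = X := by
        rw [matPow_mul_matPow_s2 hσ, matPow_mul_matPow_s2 hσ, add_neg_cancel, neg_add_cancel,
          matPow_zero hσ.1, Matrix.one_mul, Matrix.mul_one]

lemma matPow_mul_Ipow_mul_matPow (p q : ℝ) (f : Mat d) :
    matPow σ (1/(2*p)) * Ipow σ p q f * matPow σ (1/(2*p)) =
      matPow (matAbs (matPow σ (1/(2*q)) * f * matPow σ (1/(2*q)))) (q/p) :=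
  matPow_mul_mul_neg_mul_matPow hσ _ _

end Powers

lemma pnorm_rpow_self (σ f : Mat d) {p : ℝ} (hp : p ≠ 0) :
    pnorm σ f p ^ p =
      (matPow (matAbs (matPow σ (1/(2*p)) * f * matPow σ (1/(2*p)))) p).trace.re := by
  rw [pnorm, one_div p, Real.rpow_inv_rpow (re_trace_matPow_matAbs_nonneg _ _) hp]

theorem Ipow_norm_general (σ f : Mat d) (hσ : σ.PosDef)
    (p q : ℝ) (hp : 1 ≤ p) (hq : 1 ≤ q) :
    pnorm σ (Ipow σ p q f) p ^ p = pnorm σ f q ^ q := by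
  have hp0 : p ≠ 0 := by positivity
  rw [pnorm_rpow_self σ _ hp0, pnorm_rpow_self σ f (by positivity), matPow_mul_Ipow_mul_matPow hσ,
    matAbs_matPow_matAbs, matPow_matPow_matAbs, div_mul_cancel₀ q hp0]

/-- `‖I_{p,q}(f)‖_{p,σ}^p = ‖f‖_{q,σ}^q`. -/
theorem Ipow_norm (σ f : Mat d) (hσ : σ.PosDef) (hσ1 : σ.trace = 1)
    (hf : f.IsHermitian) (p q : ℝ) (hp : 1 ≤ p) (hq : 1 ≤ q) :
    pnorm σ (Ipow σ p q f) p ^ p = pnorm σ f q ^ q :=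
  Ipow_norm_general σ f hσ p q hp hq
end
end

section
/- For full-rank density matrices ρ and σ, the L_2 relative entropy evaluated at Γ_σ^{-1/2}(√ρ) = σ^{-1/4} ρ^{1/2} σ^{-1/4} equals half the quantum relative entropy: Ent_2(σ^{-1/4} ρ^{1/2} σ^{-1/4}) = (1/2) Tr(ρ(log ρ − log σ)). -/
open Matrix
open scoped ComplexOrder

noncomputable section

variable {d : ℕ}

/-- The `L_2` relative entropy, with `G = σ^{1/4} f σ^{1/4}`:
`Ent_2(f) = Tr(G² log G) − (1/2) Tr(G² log σ) − (1/2) ‖f‖²_{2,σ} log ‖f‖²_{2,σ}`. -/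
def Ent2 (σ f : Mat d) : ℝ :=
  (((matPow σ (1/4) * f * matPow σ (1/4)) ^ 2 *
      matLog (matPow σ (1/4) * f * matPow σ (1/4))).trace.re)
  - (1/2) * (((matPow σ (1/4) * f * matPow σ (1/4)) ^ 2 * matLog σ).trace.re)
  - (1/2) * (((matPow σ (1/4) * f * matPow σ (1/4)) ^ 2).trace.re) *
      Real.log (((matPow σ (1/4) * f * matPow σ (1/4)) ^ 2).trace.re)

/-! Sandwiching with `σ^{1/4}` cancels the weights `σ^{-1/4}`, so `Γ_σ^{1/2}(f) = ρ^{1/2}`.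
Then `Γ² = ρ` and `log Γ = (1/2) log ρ` by functional calculus, and the normalisation term
vanishes because `‖f‖²_{2,σ} = Tr ρ = 1`. -/

open scoped MatrixOrder in
theorem Matrix.PosDef.pos_of_mem_spectrum {n 𝕜 : Type*} [Fintype n] [DecidableEq n] [RCLike 𝕜]
    {A : Matrix n n 𝕜} (hA : A.PosDef) {x : ℝ} (hx : x ∈ spectrum ℝ A) : 0 < x :=
  hA.isStrictlyPositive.spectrum_pos hx

theorem matPow_zero_s7 {A : Mat d} (hA : IsSelfAdjoint A) : matPow A 0 = 1 := by
  simpa [matPow] using cfc_const_one ℝ A hA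

theorem matPow_one {A : Mat d} (hA : IsSelfAdjoint A) : matPow A 1 = A := by
  simpa [matPow] using cfc_id' ℝ A hA

namespace Matrix.PosDef

variable {A : Mat d} (hA : A.PosDef)
include hA

theorem matPow_add (r s : ℝ) : matPow A (r + s) = matPow A r * matPow A s := by
  rw [matPow, matPow, matPow, ← cfc_mul _ _ A (A.finite_real_spectrum.continuousOn _)
    (A.finite_real_spectrum.continuousOn _)]
  exact cfc_congr fun x hx => Real.rpow_add (hA.pos_of_mem_spectrum hx) r s

theorem matPow_mul_matPow_neg (r : ℝ) : matPow A r * matPow A (-r) = 1 := by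
  rw [← hA.matPow_add, add_neg_cancel, matPow_zero_s7 hA.isHermitian]

theorem matPow_neg_mul_matPow (r : ℝ) : matPow A (-r) * matPow A r = 1 := by
  rw [← hA.matPow_add, neg_add_cancel, matPow_zero_s7 hA.isHermitian]

theorem matPow_mul_conj_matPow_neg (r : ℝ) (X : Mat d) :
    matPow A r * (matPow A (-r) * X * matPow A (-r)) * matPow A r = X := by
  calc _ = (matPow A r * matPow A (-r)) * X * (matPow A (-r) * matPow A r) := by
        simp only [mul_assoc]
    _ = X := by rw [hA.matPow_mul_matPow_neg, hA.matPow_neg_mul_matPow, one_mul, mul_one]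

theorem matPow_half_sq : matPow A (1 / 2) ^ 2 = A := by
  rw [sq, ← hA.matPow_add, add_halves, matPow_one hA.isHermitian]

theorem matLog_matPow (r : ℝ) : matLog (matPow A r) = r • matLog A := by
  have hfin := A.finite_real_spectrum
  have hcomp := cfc_comp Real.log (fun x : ℝ => x ^ r) A hA.isHermitian
    ((hfin.image _).continuousOn _) (hfin.continuousOn _)
  rw [matLog, matLog, matPow, ← hcomp, ← cfc_const_mul r _ A (hfin.continuousOn _)]
  exact cfc_congr fun x hx => Real.log_rpow (hA.pos_of_mem_spectrum hx) r

end Matrix.PosDef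

theorem ent2_relative_density_general (σ ρ : Mat d)
    (hσ : σ.PosDef) (hρ : ρ.PosDef) (hρ1 : ρ.trace = 1) :
    Ent2 σ (matPow σ (-(1/4)) * matPow ρ (1/2) * matPow σ (-(1/4)))
      = (1/2) * (ρ * (matLog ρ - matLog σ)).trace.re := by
  have htr : ρ.trace.re = 1 := by simp [hρ1]
  rw [Ent2, hσ.matPow_mul_conj_matPow_neg, hρ.matPow_half_sq, hρ.matLog_matPow, htr,
    Real.log_one, mul_zero, sub_zero, mul_smul_comm, trace_smul, mul_sub, trace_sub]
  simp only [Complex.smul_re, Complex.sub_re, smul_eq_mul]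
  ring

/-- `Ent_2(σ^{-1/4} ρ^{1/2} σ^{-1/4}) = (1/2) D(ρ‖σ)`. -/
theorem ent2_relative_density (σ ρ : Mat d)
    (hσ : σ.PosDef) (hσ1 : σ.trace = 1) (hρ : ρ.PosDef) (hρ1 : ρ.trace = 1) :
    Ent2 σ (matPow σ (-(1/4)) * matPow ρ (1/2) * matPow σ (-(1/4)))
      = (1/2) * (ρ * (matLog ρ - matLog σ)).trace.re :=
  ent2_relative_density_general σ ρ hσ hρ hρ1
end
end

section
/- For the depolarizing Liouvillian L(f) = γ(Tr(f)·𝟙/d − f) with γ > 0 and stationary state σ = 𝟙/d, if ρ evolves as ∂_t ρ_t = L*(ρ_t), then the entropy production satisfies −Tr(L*(ρ)(log ρ − log σ)) = γ·D(ρ‖σ) + γ·D(σ‖ρ) ≥ γ·D(ρ‖σ), for any positive definite density matrix ρ. -/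
/-!
When `Tr ρ = 1` the generator is `γ (σ - ρ)`, and `-Tr(γ (σ - ρ)(log ρ - log σ))` splits by pure
algebra into `γ D(ρ‖σ) + γ D(σ‖ρ)`. For `σ = 𝟙/d` one has `D(σ‖ρ) = -log d - (1/d) ∑ log λᵢ` in the
eigenvalues `λᵢ` of `ρ`, which is nonnegative by Jensen's inequality for the concave logarithm,
since `∑ λᵢ = 1`.
-/

open Matrix
open scoped ComplexOrder

noncomputable section

variable {d : ℕ}

/-- The quantum relative entropy `D(ρ‖σ) = Tr(ρ (log ρ − log σ))` (real part). -/
def relEnt (ρ σ : Mat d) : ℝ :=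
  (ρ * (matLog ρ - matLog σ)).trace.re

lemma Matrix.IsHermitian.trace_cfc_s10 {n 𝕜 : Type*} [Fintype n] [DecidableEq n] [RCLike 𝕜]
    {A : Matrix n n 𝕜} (hA : A.IsHermitian) (f : ℝ → ℝ) :
    (cfc f A).trace = ∑ i, (f (hA.eigenvalues i) : 𝕜) := by
  rw [hA.cfc_eq, Matrix.IsHermitian.cfc, Unitary.conjStarAlgAut_apply, Matrix.trace_mul_cycle,
    Unitary.coe_star_mul_self, one_mul, Matrix.trace_diagonal]
  rfl

lemma Real.sum_log_le_card_mul_log_inv_card {ι : Type*} [Fintype ι] {p : ι → ℝ}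
    (hp : ∀ i, 0 < p i) (hp1 : ∑ i, p i = 1) :
    ∑ i, Real.log (p i) ≤ Fintype.card ι * Real.log (Fintype.card ι : ℝ)⁻¹ := by
  have hcard : (Fintype.card ι : ℝ) ≠ 0 := by
    rintro h
    simp [Fintype.card_eq_zero_iff.mp (by exact_mod_cast h)] at hp1
  have jensen := strictConcaveOn_log_Ioi.concaveOn.le_map_sum (t := Finset.univ)
    (w := fun _ => (Fintype.card ι : ℝ)⁻¹) (p := p) (fun _ _ => by positivity)
    (by simp [hcard]) (fun i _ => hp i)
  simp only [smul_eq_mul, ← Finset.mul_sum, hp1, mul_one] at jensen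
  rwa [inv_mul_le_iff₀ (by positivity)] at jensen

lemma matLog_algebraMap (r : ℝ) : matLog (algebraMap ℝ (Mat d) r) = algebraMap ℝ _ (Real.log r) :=
  cfc_algebraMap r Real.log

lemma inv_natCast_smul_one : (d : ℂ)⁻¹ • (1 : Mat d) = algebraMap ℝ (Mat d) (d : ℝ)⁻¹ := by
  rw [Algebra.algebraMap_eq_smul_one, ← algebraMap_smul ℂ (d : ℝ)⁻¹ (1 : Mat d)]
  push_cast
  rfl

lemma neg_re_trace_smul_sub_mul_eq_relEnt_add_relEnt (γ : ℝ) (ρ σ : Mat d) :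
    -(((γ : ℂ) • (σ - ρ) * (matLog ρ - matLog σ)).trace.re) =
      γ * relEnt ρ σ + γ * relEnt σ ρ := by
  simp only [relEnt, smul_mul_assoc, trace_smul, sub_mul, mul_sub, trace_sub, smul_eq_mul,
    Complex.re_ofReal_mul, Complex.sub_re]
  ring

lemma relEnt_inv_natCast_smul_one {ρ : Mat d} (hρ : ρ.IsHermitian) :
    relEnt ((d : ℂ)⁻¹ • (1 : Mat d)) ρ =
      (d : ℝ)⁻¹ * (d * Real.log (d : ℝ)⁻¹ - ∑ i, Real.log (hρ.eigenvalues i)) := by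
  rw [relEnt, inv_natCast_smul_one, matLog_algebraMap, matLog, Algebra.algebraMap_eq_smul_one,
    Algebra.algebraMap_eq_smul_one, smul_mul_assoc, one_mul, trace_smul, trace_sub, trace_smul, trace_one, hρ.trace_cfc_s10,
    Fintype.card_fin]
  simp only [Complex.real_smul, Complex.re_ofReal_mul, Complex.sub_re, Complex.re_sum,
    Complex.natCast_re, mul_comm (Real.log _)]
  rfl

lemma relEnt_inv_natCast_smul_one_nonneg {ρ : Mat d} (hρ : ρ.PosDef) (hρ1 : ρ.trace = 1) :
    0 ≤ relEnt ((d : ℂ)⁻¹ • (1 : Mat d)) ρ := by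
  have hsum : ∑ i, hρ.1.eigenvalues i = 1 := by
    simpa using congrArg Complex.re (hρ.1.trace_eq_sum_eigenvalues.symm.trans hρ1)
  have hjensen := Real.sum_log_le_card_mul_log_inv_card hρ.eigenvalues_pos hsum
  rw [Fintype.card_fin] at hjensen
  rw [relEnt_inv_natCast_smul_one hρ.1]
  exact mul_nonneg (by positivity) (sub_nonneg.mpr hjensen)

theorem depolarizing_entropy_production_general (γ : ℝ) (hγ : 0 < γ)
    (ρ : Mat d) (hρ : ρ.PosDef) (hρ1 : ρ.trace = 1) :
    (-(((γ : ℂ) • ((ρ.trace / (d : ℂ)) • (1 : Mat d) - ρ) *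
          (matLog ρ - matLog ((d : ℂ)⁻¹ • (1 : Mat d)))).trace.re)
        = γ * relEnt ρ ((d : ℂ)⁻¹ • (1 : Mat d))
          + γ * relEnt ((d : ℂ)⁻¹ • (1 : Mat d)) ρ) ∧
    γ * relEnt ρ ((d : ℂ)⁻¹ • (1 : Mat d)) ≤
      -(((γ : ℂ) • ((ρ.trace / (d : ℂ)) • (1 : Mat d) - ρ) *
          (matLog ρ - matLog ((d : ℂ)⁻¹ • (1 : Mat d)))).trace.re) := by
  rw [hρ1, one_div, neg_re_trace_smul_sub_mul_eq_relEnt_add_relEnt]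
  exact ⟨rfl, le_add_of_nonneg_right (mul_nonneg hγ.le (relEnt_inv_natCast_smul_one_nonneg hρ hρ1))⟩

/-- entropy production of the depolarizing semigroup. For
`L*(ρ) = γ(Tr(ρ)·𝟙/d − ρ)` with stationary state `σ = 𝟙/d`,
`−Tr(L*(ρ)(log ρ − log σ)) = γ D(ρ‖σ) + γ D(σ‖ρ) ≥ γ D(ρ‖σ)`. -/
theorem depolarizing_entropy_production (hd : 0 < d) (γ : ℝ) (hγ : 0 < γ)
    (ρ : Mat d) (hρ : ρ.PosDef) (hρ1 : ρ.trace = 1) :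
    (-(((γ : ℂ) • ((ρ.trace / (d : ℂ)) • (1 : Mat d) - ρ) *
          (matLog ρ - matLog ((d : ℂ)⁻¹ • (1 : Mat d)))).trace.re)
        = γ * relEnt ρ ((d : ℂ)⁻¹ • (1 : Mat d))
          + γ * relEnt ((d : ℂ)⁻¹ • (1 : Mat d)) ρ) ∧
    γ * relEnt ρ ((d : ℂ)⁻¹ • (1 : Mat d)) ≤
      -(((γ : ℂ) • ((ρ.trace / (d : ℂ)) • (1 : Mat d) - ρ) *
          (matLog ρ - matLog ((d : ℂ)⁻¹ • (1 : Mat d)))).trace.re) :=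
  depolarizing_entropy_production_general γ hγ ρ hρ hρ1
end
end

section
/- Let T be a completely positive unital map on d×d matrices with Kraus operators {A_j}, i.e. T(g) = Σ_j A_j† g A_j. Then for any positive definite Hermitian g, the function h(s) = Tr(g^{2−s} T(g^s)) is convex on s ∈ [0,2]. -/
open Matrix
open scoped ComplexOrder

noncomputable section

variable {d : ℕ}

/-! In an eigenbasis `g = Σ_k λ_k |k⟩⟨k|` the function becomes
`Σ_{j,k,l} |⟨l|A_j|k⟩|² λ_k^{2-s} λ_l^s`, a nonnegative combination of the exponentials
`s ↦ λ_k² (λ_l/λ_k)^s`, each of which is convex. -/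

theorem ConvexOn.sum {𝕜 E β ι : Type*} [Semiring 𝕜] [PartialOrder 𝕜] [AddCommMonoid E]
    [AddCommMonoid β] [PartialOrder β] [IsOrderedAddMonoid β] [SMul 𝕜 E] [DistribMulAction 𝕜 β]
    {s : Set E} {f : ι → E → β} (t : Finset ι) (hs : Convex 𝕜 s)
    (hf : ∀ i ∈ t, ConvexOn 𝕜 s (f i)) : ConvexOn 𝕜 s fun x => ∑ i ∈ t, f i x := by
  classical
  induction t using Finset.induction_on with
  | empty => exact ⟨hs, fun _ _ _ _ _ _ _ _ _ => by simp⟩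
  | insert i t hi ih =>
    simp only [Finset.sum_insert hi]
    exact (hf i (t.mem_insert_self i)).add (ih fun j hj => hf j (Finset.mem_insert_of_mem hj))

theorem convexOn_rpow_sub_mul_rpow {a b : ℝ} (ha : 0 < a) (hb : 0 < b) (t : ℝ) :
    ConvexOn ℝ Set.univ fun s : ℝ => a ^ (t - s) * b ^ s := by
  have h_eq : (fun s : ℝ => a ^ (t - s) * b ^ s) = fun s => a ^ t • (b / a) ^ s := by
    funext s
    rw [Real.rpow_sub ha, Real.div_rpow hb.le ha.le, smul_eq_mul]
    field_simp
  rw [h_eq]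
  exact (convexOn_rpow_left (div_pos hb ha)).smul (by positivity)

namespace Matrix

variable {n : Type*} [Fintype n] [DecidableEq n]

theorem trace_diagonal_mul_conjTranspose_mul_diagonal_mul (a b : n → ℂ) (C : Matrix n n ℂ) :
    (diagonal a * Cᴴ * diagonal b * C).trace
      = ∑ k, ∑ l, Complex.normSq (C l k) * (a k * b l) := by
  simp only [trace, diag, mul_apply, diagonal_apply, conjTranspose_apply, RCLike.star_def,
    Complex.normSq_eq_conj_mul_self, ite_mul, mul_ite, zero_mul, mul_zero, Finset.sum_ite_eq,
    Finset.sum_ite_eq', Finset.mem_univ, if_true]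
  exact Finset.sum_congr rfl fun k _ => Finset.sum_congr rfl fun l _ => by ring

theorem IsHermitian.trace_cfc_mul_conjTranspose_mul_cfc_mul {H : Matrix n n ℂ}
    (hH : H.IsHermitian) (f g : ℝ → ℝ) (B : Matrix n n ℂ) :
    (cfc f H * (Bᴴ * cfc g H * B)).trace
      = ∑ k, ∑ l, Complex.normSq (((hH.eigenvectorUnitary : Matrix n n ℂ)ᴴ * B *
          hH.eigenvectorUnitary) l k) * (f (hH.eigenvalues k) * g (hH.eigenvalues l)) := by
  set U : Matrix n n ℂ := ↑hH.eigenvectorUnitary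
  have hUU : Uᴴ * U = 1 := Unitary.star_mul_self_of_mem hH.eigenvectorUnitary.2
  have hUU' : U * Uᴴ = 1 := Unitary.mul_star_self_of_mem hH.eigenvectorUnitary.2
  have h_cfc (φ : ℝ → ℝ) :
      cfc φ H = U * diagonal (fun k => (φ (hH.eigenvalues k) : ℂ)) * Uᴴ := by
    rw [hH.cfc_eq, IsHermitian.cfc, Unitary.conjStarAlgAut_apply]
    rfl
  have h_conj (D₁ D₂ : Matrix n n ℂ) : U * D₁ * Uᴴ * (Bᴴ * (U * D₂ * Uᴴ) * B)
      = U * (D₁ * (Uᴴ * B * U)ᴴ * D₂ * (Uᴴ * B * U)) * Uᴴ := by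
    simp only [conjTranspose_mul, conjTranspose_conjTranspose, Matrix.mul_assoc, hUU',
      Matrix.mul_one]
  rw [h_cfc, h_cfc, h_conj, trace_mul_cycle, ← Matrix.mul_assoc, hUU, Matrix.one_mul,
    trace_diagonal_mul_conjTranspose_mul_diagonal_mul]
  push_cast
  rfl

end Matrix

theorem kraus_h_convex_general {ι : Type*} [Fintype ι] (A : ι → Mat d)
    (g : Mat d) (hg : g.PosDef) :
    ConvexOn ℝ (Set.Icc (0 : ℝ) 2)
      (fun s : ℝ =>
        (matPow g (2 - s) * ∑ j, (A j)ᴴ * matPow g s * A j).trace.re) := by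
  have hH : g.IsHermitian := hg.1
  set U := (hH.eigenvectorUnitary : Matrix (Fin d) (Fin d) ℂ)
  have h_expand : (fun s : ℝ => (matPow g (2 - s) * ∑ j, (A j)ᴴ * matPow g s * A j).trace.re)
      = fun s => ∑ j, ∑ k, ∑ l, Complex.normSq ((Uᴴ * A j * U) l k) *
          (hH.eigenvalues k ^ (2 - s) * hH.eigenvalues l ^ s) := by
    funext s
    simp only [Finset.mul_sum, trace_sum, Complex.re_sum, matPow,
      hH.trace_cfc_mul_conjTranspose_mul_cfc_mul, Complex.ofReal_re]
    rfl
  rw [h_expand]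
  refine ConvexOn.sum _ (convex_Icc 0 2) fun j _ => ConvexOn.sum _ (convex_Icc 0 2) fun k _ =>
    ConvexOn.sum _ (convex_Icc 0 2) fun l _ => ?_
  exact ((convexOn_rpow_sub_mul_rpow (hg.eigenvalues_pos k) (hg.eigenvalues_pos l) 2).smul
    (Complex.normSq_nonneg _)).subset (Set.subset_univ _) (convex_Icc 0 2)

/-- for a completely positive unital map `T(g) = Σ_j A_j† g A_j`,
the function `h(s) = Tr(g^{2−s} T(g^s))` is convex on `[0,2]` for positive definite `g`. -/
theorem kraus_h_convex {ι : Type*} [Fintype ι] (A : ι → Mat d)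
    (hunital : ∑ j, (A j)ᴴ * A j = (1 : Mat d))
    (g : Mat d) (hg : g.PosDef) :
    ConvexOn ℝ (Set.Icc (0 : ℝ) 2)
      (fun s : ℝ =>
        (matPow g (2 - s) * ∑ j, (A j)ᴴ * matPow g s * A j).trace.re) :=
  kraus_h_convex_general A g hg
end
end
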